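/- arXiv:1305.2142 — 2 statements merged into one kernel-verified Lean document; each statement's English description precedes it below -/
import Mathlib

section
/- Let n ≥ 1 and let C = (C_i^j(d)) be any collection of elements of ℚ_α indexed by integers d ≥ 1 and ordered pairs i ≠ j in {1,…,n}. If F ∈ H_α⟪ħ⟫[[q]] is C-recursive, then: (a) for every i, F(α_i,ħ,q) ∈ ℚ_α(ħ)[[q]], i.e., every q-coefficient of F(α_i,ħ,q) is (the Laurent expansion of) a rational function of ħ; (b) for every d ≥ 1, every d′ ≥ 0 and all i ≠ j, the coefficient of q^{d′} in F(α_i,ħ,q) is regular at ħ = (α_i−α_j)/d; and (c) there exist integers N_d ≥ 0 and elements F_i^r(d) ∈ ℚ_α such that for every i, F(α_i,ħ,q) = ∑_{d≥0} ∑_{r=−N_d}^{N_d} F_i^r(d)·ħ^r·q^d + ∑_{d≥1} ∑_{j≠i} [C_i^j(d)·q^d/(ħ − (α_j−α_i)/d)]·F(α_j,(α_j−α_i)/d,q), where F(α_j,(α_j−α_i)/d,q) ∈ ℚ_α[[q]] is obtained by evaluating each q-coefficient of F(α_j,ħ,q) at ħ = (α_j−α_i)/d. -/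
/-!
Setting: `Kf n = ℚ(α₁,…,αₙ)` is the field of rational functions in `n` variables over `ℚ`,
`Lf n = ℚ_α⟪ħ⟫` is the algebra of Laurent series in `ħ⁻¹` (modeled as Laurent series in the
variable `t = ħ⁻¹`, so that the coefficient of `ħ^r` is the Hahn-series coefficient at `-r`).
An element `F ∈ H_α⟪ħ⟫[[q]]` is modeled by its `n` evaluations `F : Fin n → PowerSeries (Lf n)`
(by the Chinese remainder theorem, `H_α ≅ ∏ᵢ ℚ_α` via `x ↦ (αᵢ)ᵢ`, so this is faithful).
-/

open scoped Classical

noncomputable section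

namespace SQ

/-- The field `ℚ_α = ℚ(α₁,…,αₙ)`. -/
abbrev Kf (n : ℕ) : Type := FractionRing (MvPolynomial (Fin n) ℚ)

/-- The element `αᵢ ∈ ℚ_α`. -/
def alpha (n : ℕ) (i : Fin n) : Kf n :=
  algebraMap (MvPolynomial (Fin n) ℚ) (Kf n) (MvPolynomial.X i)

/-- `ℚ_α⟪ħ⟫`: Laurent series in `t = ħ⁻¹`. -/
abbrev Lf (n : ℕ) : Type := LaurentSeries (Kf n)

/-- `ħ = t⁻¹` where `t` is the Laurent-series variable. -/
def hbar (n : ℕ) : Lf n := HahnSeries.single (-1 : ℤ) 1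

/-- The substitution `ħ ↦ −ħ` on `ℚ_α⟪ħ⟫`. -/
def negH (n : ℕ) (x : Lf n) : Lf n :=
  ⟨fun a => (-1 : Kf n) ^ a * x.coeff a,
    x.isPWO_support'.mono fun a ha => by
      simp only [Function.mem_support] at ha ⊢
      exact fun h => ha (by rw [h, mul_zero])⟩

/-- `x ∈ ℚ_α⟪ħ⟫` lies in (the image of) `ℚ_α(ħ)`, i.e. `Q(ħ)·x = P(ħ)` for some polynomials
`P, Q` with `Q ≠ 0`. -/
def IsRatH (n : ℕ) (x : Lf n) : Prop :=
  ∃ P Q : Polynomial (Kf n), Q ≠ 0 ∧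
    Polynomial.aeval (hbar n) Q * x = Polynomial.aeval (hbar n) P

/-- `x ∈ ℚ_α⟪ħ⟫` is a rational function of `ħ`, regular at `ħ = c`, with value `v` there. -/
def RegEvalAt (n : ℕ) (x : Lf n) (c v : Kf n) : Prop :=
  ∃ P Q : Polynomial (Kf n), Polynomial.eval c Q ≠ 0 ∧
    Polynomial.aeval (hbar n) Q * x = Polynomial.aeval (hbar n) P ∧
    v = Polynomial.eval c P / Polynomial.eval c Q

/-- `x` is a rational function of `ħ` regular at `ħ = c`. -/
def RegAt (n : ℕ) (x : Lf n) (c : Kf n) : Prop := ∃ v : Kf n, RegEvalAt n x c v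

/-- `x` is a Laurent polynomial in `ħ`, i.e. an element of `ℚ_α[ħ,ħ⁻¹]`. -/
def IsLaurentPolyH (n : ℕ) (x : Lf n) : Prop := x.support.Finite

/-- `x` is a polynomial in `ħ`, i.e. an element of `ℚ_α[ħ]`. -/
def IsPolyH (n : ℕ) (x : Lf n) : Prop :=
  ∃ P : Polynomial (Kf n), x = Polynomial.aeval (hbar n) P

/-- Definition 5.1 (`C`-recursivity).  `C d i j` is the structure constant `C_i^j(d)`
(only the values with `d ≥ 1` and `j ≠ i` are used). -/
def CRecursive (n : ℕ) (C : ℕ → Fin n → Fin n → Kf n)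
    (F : Fin n → PowerSeries (Lf n)) : Prop :=
  ∀ dstar : ℕ,
    (∀ d : ℕ, 1 ≤ d → d ≤ dstar → ∀ i : Fin n,
        IsRatH n (PowerSeries.coeff (dstar - d) (F i))) →
    (∀ d : ℕ, 1 ≤ d → d < dstar → ∀ i j : Fin n, i ≠ j →
        RegAt n (PowerSeries.coeff d (F i))
          ((alpha n i - alpha n j) / (d : Kf n))) →
    ∀ i : Fin n, ∃ v : ℕ → Fin n → Kf n,
      (∀ d : ℕ, ∀ j : Fin n, 1 ≤ d → d ≤ dstar → j ≠ i →
          RegEvalAt n (PowerSeries.coeff (dstar - d) (F j))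
            ((alpha n j - alpha n i) / (d : Kf n)) (v d j)) ∧
      IsLaurentPolyH n
        (PowerSeries.coeff dstar (F i)
          - ∑ d ∈ Finset.Icc 1 dstar, ∑ j ∈ Finset.univ.erase i,
              algebraMap (Kf n) (Lf n) (C d i j)
                * (hbar n
                    - algebraMap (Kf n) (Lf n)
                        ((alpha n j - alpha n i) / (d : Kf n)))⁻¹
                * algebraMap (Kf n) (Lf n) (v d j))

/-- The coefficient of `z^a q^D` in
`Φ^η_{F,F′}(ħ,z,q) = ∑ᵢ (η(αᵢ) e^{αᵢ z} / ∏_{k≠i}(αᵢ−α_k)) F(αᵢ,ħ,q e^{ħz}) F′(αᵢ,−ħ,q)`.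
(Only the values `η(αᵢ)` of the rational function `η` enter the definition, so `η` is
represented by its tuple of values `eta : Fin n → Kf n`.) -/
def PhiCoeff (n : ℕ) (eta : Fin n → Kf n) (F F' : Fin n → PowerSeries (Lf n))
    (a D : ℕ) : Lf n :=
  ∑ i : Fin n, ∑ d ∈ Finset.range (D + 1), ∑ m ∈ Finset.range (a + 1),
    algebraMap (Kf n) (Lf n)
        (eta i / (∏ k ∈ Finset.univ.erase i, (alpha n i - alpha n k))
          * (alpha n i ^ m / (Nat.factorial m : Kf n))
          * ((d : Kf n) ^ (a - m) / (Nat.factorial (a - m) : Kf n)))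
      * hbar n ^ (a - m)
      * PowerSeries.coeff d (F i)
      * negH n (PowerSeries.coeff (D - d) (F' i))

/-- The η mutual polynomiality condition: every coefficient of `z^a q^D` of `Φ^η_{F,F′}`
is a polynomial in `ħ`. -/
def MPC (n : ℕ) (eta : Fin n → Kf n) (F F' : Fin n → PowerSeries (Lf n)) : Prop :=
  ∀ a D : ℕ, IsPolyH n (PhiCoeff n eta F F' a D)

/-!
Induct on the `q`-degree `D`. Once the coefficients of degree `< D` are known to be rational in
`ħ` and regular at all points `(αᵢ - α_j)/d`, `C`-recursivity writes the degree-`D` coefficient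
of `F(αᵢ)` as a Laurent polynomial in `ħ` plus simple poles at `ħ = (α_j - αᵢ)/d`, `j ≠ i`.
Both parts are rational; the Laurent polynomial is regular away from `ħ = 0`, and the poles avoid
the points `(αᵢ - α_{j'})/d'`: equality would be a linear relation
`(d + d') αᵢ = d' α_j + d α_{j'}` among the independent variables. Since `ħ` is transcendental
over `ℚ_α`, the value of a rational function at a regular point is well defined, so the values
produced by `C`-recursivity at each degree assemble into one closed recursion.
-/

section

variable {n : ℕ}

lemma isRatH_zero : IsRatH n 0 := ⟨0, 1, one_ne_zero, by simp⟩

lemma isRatH_add {x y : Lf n} (hx : IsRatH n x) (hy : IsRatH n y) : IsRatH n (x + y) := by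
  obtain ⟨P₁, Q₁, hQ₁, h₁⟩ := hx
  obtain ⟨P₂, Q₂, hQ₂, h₂⟩ := hy
  refine ⟨Q₂ * P₁ + Q₁ * P₂, Q₁ * Q₂, mul_ne_zero hQ₁ hQ₂, ?_⟩
  simp only [map_mul, map_add]
  linear_combination Polynomial.aeval (hbar n) Q₂ * h₁ + Polynomial.aeval (hbar n) Q₁ * h₂

lemma isRatH_sum {ι : Type*} (s : Finset ι) (f : ι → Lf n) (h : ∀ x ∈ s, IsRatH n (f x)) :
    IsRatH n (∑ x ∈ s, f x) :=
  Finset.sum_induction f (IsRatH n) (fun _ _ => isRatH_add) isRatH_zero h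

lemma RegEvalAt.isRatH {x : Lf n} {c v : Kf n} (h : RegEvalAt n x c v) : IsRatH n x := by
  obtain ⟨P, Q, hQ, hx, -⟩ := h
  exact ⟨P, Q, fun hQ0 => hQ (by rw [hQ0, Polynomial.eval_zero]), hx⟩

lemma RegAt.isRatH {x : Lf n} {c : Kf n} (h : RegAt n x c) : IsRatH n x :=
  h.choose_spec.isRatH

lemma RegEvalAt.add {x y : Lf n} {c vx vy : Kf n} (hx : RegEvalAt n x c vx)
    (hy : RegEvalAt n y c vy) : RegEvalAt n (x + y) c (vx + vy) := by
  obtain ⟨P₁, Q₁, hQ₁, h₁, rfl⟩ := hx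
  obtain ⟨P₂, Q₂, hQ₂, h₂, rfl⟩ := hy
  refine ⟨Q₂ * P₁ + Q₁ * P₂, Q₁ * Q₂, by simp [hQ₁, hQ₂], ?_, ?_⟩
  · simp only [map_mul, map_add]
    linear_combination Polynomial.aeval (hbar n) Q₂ * h₁ + Polynomial.aeval (hbar n) Q₁ * h₂
  · simp only [Polynomial.eval_add, Polynomial.eval_mul]
    field_simp

lemma regAt_zero {c : Kf n} : RegAt n 0 c := ⟨0, 0, 1, by simp, by simp, by simp⟩

lemma regAt_sum {ι : Type*} (s : Finset ι) (f : ι → Lf n) {c : Kf n}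
    (h : ∀ x ∈ s, RegAt n (f x) c) : RegAt n (∑ x ∈ s, f x) c :=
  Finset.sum_induction f (RegAt n · c)
    (fun _ _ ⟨_, hx⟩ ⟨_, hy⟩ => ⟨_, hx.add hy⟩) regAt_zero h

lemma algebraMap_eq_single (c : Kf n) :
    algebraMap (Kf n) (Lf n) c = HahnSeries.single 0 c := by
  rw [LaurentSeries.algebraMap_apply, HahnSeries.C_apply]

lemma hbar_ne_zero : hbar n ≠ 0 :=
  HahnSeries.single_ne_zero one_ne_zero

lemma hbar_zpow (r : ℤ) : hbar n ^ r = HahnSeries.single (-r) 1 := by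
  rw [hbar, ← neg_neg (-1 : ℤ), ← inv_one, ← HahnSeries.inv_single, inv_zpow', neg_neg,
    ← RatFunc.single_zpow, inv_one]

lemma algebraMap_mul_hbar_zpow (c : Kf n) (r : ℤ) :
    algebraMap (Kf n) (Lf n) c * hbar n ^ r = HahnSeries.single (-r) c := by
  rw [algebraMap_eq_single, hbar_zpow, HahnSeries.single_mul_single, zero_add, mul_one]

lemma coeff_aeval_hbar (P : Polynomial (Kf n)) (k : ℕ) :
    (Polynomial.aeval (hbar n) P).coeff (-(k : ℤ)) = P.coeff k := by
  induction P using Polynomial.induction_on' with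
  | add P Q hP hQ => rw [map_add, HahnSeries.coeff_add, hP, hQ, Polynomial.coeff_add]
  | monomial i a =>
    rw [Polynomial.aeval_monomial, ← zpow_natCast, algebraMap_mul_hbar_zpow,
      HahnSeries.coeff_single, Polynomial.coeff_monomial]
    simp only [neg_inj, Nat.cast_inj, eq_comm]

lemma aeval_hbar_injective : Function.Injective (Polynomial.aeval (R := Kf n) (hbar n)) :=
  fun P Q h => Polynomial.ext fun k => by
    rw [← coeff_aeval_hbar P k, ← coeff_aeval_hbar Q k, h]

lemma RegEvalAt.unique {x : Lf n} {c v₁ v₂ : Kf n}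
    (h₁ : RegEvalAt n x c v₁) (h₂ : RegEvalAt n x c v₂) : v₁ = v₂ := by
  obtain ⟨P₁, Q₁, hQ₁, hx₁, rfl⟩ := h₁
  obtain ⟨P₂, Q₂, hQ₂, hx₂, rfl⟩ := h₂
  have hcross : Q₂ * P₁ = Q₁ * P₂ := by
    apply aeval_hbar_injective
    simp only [map_mul]
    linear_combination Polynomial.aeval (hbar n) Q₁ * hx₂ - Polynomial.aeval (hbar n) Q₂ * hx₁
  rw [div_eq_div_iff hQ₁ hQ₂]
  simpa only [Polynomial.eval_mul, mul_comm] using congrArg (Polynomial.eval c) hcross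

lemma regAt_algebraMap_mul_hbar_zpow (a : Kf n) (r : ℤ) {c : Kf n} (hc : c ≠ 0) :
    RegAt n (algebraMap (Kf n) (Lf n) a * hbar n ^ r) c := by
  rcases r with k | k
  · exact ⟨_, Polynomial.C a * Polynomial.X ^ k, 1, by simp, by simp, rfl⟩
  · refine ⟨_, Polynomial.C a, Polynomial.X ^ (k + 1), by simp [hc], ?_, rfl⟩
    rw [Int.negSucc_eq, ← Nat.cast_add_one, zpow_neg, zpow_natCast]
    field_simp [pow_ne_zero (k + 1) (hbar_ne_zero (n := n))]
    simp

lemma exists_subset_Icc_neg_of_finite {s : Set ℤ} (hs : s.Finite) :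
    ∃ N : ℕ, s ⊆ Set.Icc (-(N : ℤ)) N := by
  refine ⟨hs.toFinset.sup Int.natAbs, fun a ha => ?_⟩
  have : a.natAbs ≤ hs.toFinset.sup Int.natAbs := Finset.le_sup (hs.mem_toFinset.2 ha)
  simp only [Set.mem_Icc]
  omega

lemma exists_support_subset_Icc {ι : Type*} [Finite ι] {x : ι → Lf n}
    (hx : ∀ i, IsLaurentPolyH n (x i)) :
    ∃ N : ℕ, ∀ i, (x i).support ⊆ Set.Icc (-(N : ℤ)) N := by
  obtain ⟨N, hN⟩ := exists_subset_Icc_neg_of_finite (Set.finite_iUnion hx)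
  exact ⟨N, fun i => (Set.subset_iUnion _ i).trans hN⟩

lemma eq_sum_algebraMap_mul_hbar_zpow {x : Lf n} {N : ℕ}
    (hx : x.support ⊆ Set.Icc (-(N : ℤ)) N) :
    x = ∑ r ∈ Finset.Icc (-(N : ℤ)) N, algebraMap (Kf n) (Lf n) (x.coeff (-r)) * hbar n ^ r := by
  ext a
  simp only [HahnSeries.coeff_sum, algebraMap_mul_hbar_zpow, HahnSeries.coeff_single,
    ← neg_eq_iff_eq_neg, Finset.sum_ite_eq, neg_neg, Finset.mem_Icc]
  split_ifs with ha
  · rfl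
  · by_contra hne
    exact ha (by simpa [and_comm, neg_le] using hx ((HahnSeries.mem_support _ _).2 hne))

lemma IsLaurentPolyH.regAt {x : Lf n} (hx : IsLaurentPolyH n x) {c : Kf n} (hc : c ≠ 0) :
    RegAt n x c := by
  obtain ⟨N, hN⟩ := exists_subset_Icc_neg_of_finite hx
  rw [eq_sum_algebraMap_mul_hbar_zpow hN]
  exact regAt_sum _ _ fun r _ => regAt_algebraMap_mul_hbar_zpow _ r hc

lemma IsLaurentPolyH.isRatH {x : Lf n} (hx : IsLaurentPolyH n x) : IsRatH n x :=
  (hx.regAt one_ne_zero).isRatH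

lemma regEvalAt_pole (A w c c' : Kf n) (hc : c' ≠ c) :
    RegEvalAt n (algebraMap (Kf n) (Lf n) A
        * (hbar n - algebraMap (Kf n) (Lf n) c)⁻¹ * algebraMap (Kf n) (Lf n) w)
      c' (A * w / (c' - c)) := by
  have hpole : hbar n - algebraMap (Kf n) (Lf n) c ≠ 0 := by
    intro h
    have h₁ := congrArg (HahnSeries.coeff · (-1)) h
    simp [hbar, algebraMap_eq_single] at h₁
  refine ⟨Polynomial.C (A * w), Polynomial.X - Polynomial.C c, by simpa using sub_ne_zero.2 hc,
    ?_, by simp⟩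
  simp only [map_sub, Polynomial.aeval_X, Polynomial.aeval_C, map_mul]
  field_simp

lemma natCast_mul_alpha_ne {i j j' : Fin n} (hj : j ≠ i) (hj' : j' ≠ i) {a : ℕ} (ha : a ≠ 0)
    (b c : ℕ) : (a : Kf n) * alpha n i ≠ b * alpha n j + c * alpha n j' := by
  intro h
  have hpoly : (a : MvPolynomial (Fin n) ℚ) * MvPolynomial.X i
      = (b : MvPolynomial (Fin n) ℚ) * MvPolynomial.X j
        + (c : MvPolynomial (Fin n) ℚ) * MvPolynomial.X j' :=
    IsFractionRing.injective (MvPolynomial (Fin n) ℚ) (Kf n)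
      (by simpa only [alpha, map_add, map_mul, map_natCast] using h)
  have heval := congrArg (MvPolynomial.eval (Pi.single i 1)) hpoly
  simp only [map_mul, map_add, map_natCast, MvPolynomial.eval_X, Pi.single_eq_same,
    Pi.single_eq_of_ne hj, Pi.single_eq_of_ne hj', mul_one, mul_zero, add_zero,
    Nat.cast_eq_zero] at heval
  exact ha heval

lemma alpha_sub_alpha_ne_zero {i j : Fin n} (h : i ≠ j) : alpha n i - alpha n j ≠ 0 :=
  sub_ne_zero.2 fun he => natCast_mul_alpha_ne h.symm h.symm one_ne_zero 1 0 (by simp [he])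

lemma alpha_sub_div_ne_alpha_sub_div {i j j' : Fin n} (hj : j ≠ i) (hj' : j' ≠ i) {d d' : ℕ}
    (hd : 1 ≤ d) (hd' : 1 ≤ d') :
    (alpha n i - alpha n j') / (d' : Kf n) ≠ (alpha n j - alpha n i) / (d : Kf n) := by
  rw [Ne, div_eq_div_iff (Nat.cast_ne_zero.2 (by omega)) (Nat.cast_ne_zero.2 (by omega))]
  intro h
  refine natCast_mul_alpha_ne hj hj' (a := d + d') (by omega) d' d ?_
  push_cast
  linear_combination h

def poleSum (C : ℕ → Fin n → Fin n → Kf n) (i : Fin n) (D : ℕ) (w : ℕ → Fin n → Kf n) : Lf n :=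
  ∑ d ∈ Finset.Icc 1 D, ∑ j ∈ Finset.univ.erase i,
    algebraMap (Kf n) (Lf n) (C d i j)
      * (hbar n - algebraMap (Kf n) (Lf n) ((alpha n j - alpha n i) / (d : Kf n)))⁻¹
      * algebraMap (Kf n) (Lf n) (w d j)

variable {C : ℕ → Fin n → Fin n → Kf n}

lemma isRatH_poleSum (i : Fin n) (D : ℕ) (w : ℕ → Fin n → Kf n) :
    IsRatH n (poleSum C i D w) :=
  isRatH_sum _ _ fun _ _ => isRatH_sum _ _ fun _ _ =>
    (regEvalAt_pole _ _ _ _ (add_ne_left.2 one_ne_zero)).isRatH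

lemma regAt_poleSum {i j : Fin n} (hij : i ≠ j) {d : ℕ} (hd : 1 ≤ d) (D : ℕ)
    (w : ℕ → Fin n → Kf n) :
    RegAt n (poleSum C i D w) ((alpha n i - alpha n j) / (d : Kf n)) :=
  regAt_sum _ _ fun _ hd' => regAt_sum _ _ fun _ hj' =>
    ⟨_, regEvalAt_pole _ _ _ _ <| alpha_sub_div_ne_alpha_sub_div (Finset.mem_erase.1 hj').1
      (Ne.symm hij) (Finset.mem_Icc.1 hd').1 hd⟩

variable {F : Fin n → PowerSeries (Lf n)}

theorem CRecursive.isRatH_coeff_and_regAt_coeff (hrec : CRecursive n C F) (D : ℕ) :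
    (∀ i, IsRatH n (PowerSeries.coeff D (F i))) ∧
      ∀ d : ℕ, 1 ≤ d → ∀ i j, i ≠ j →
        RegAt n (PowerSeries.coeff D (F i)) ((alpha n i - alpha n j) / (d : Kf n)) := by
  induction D using Nat.strong_induction_on with
  | _ D ih =>
  have hsplit (i : Fin n) : ∃ w, IsLaurentPolyH n (PowerSeries.coeff D (F i) - poleSum C i D w) :=
    let ⟨w, _, hw⟩ := hrec D (fun d hd _ i => (ih (D - d) (by omega)).1 i)
      (fun d hd hdD i j hij => (ih d hdD).2 d hd i j hij) i
    ⟨w, hw⟩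
  refine ⟨fun i => ?_, fun d hd i j hij => ?_⟩
  · obtain ⟨w, hw⟩ := hsplit i
    rw [← sub_add_cancel (PowerSeries.coeff D (F i)) (poleSum C i D w)]
    exact isRatH_add hw.isRatH (isRatH_poleSum i D w)
  · obtain ⟨w, hw⟩ := hsplit i
    obtain ⟨_, hreg⟩ := hw.regAt <| div_ne_zero (alpha_sub_alpha_ne_zero hij)
      (Nat.cast_ne_zero.2 (Nat.one_le_iff_ne_zero.1 hd))
    obtain ⟨_, hpole⟩ := regAt_poleSum (C := C) hij hd D w
    rw [← sub_add_cancel (PowerSeries.coeff D (F i)) (poleSum C i D w)]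
    exact ⟨_, hreg.add hpole⟩

theorem CRecursive.isLaurentPolyH_coeff_sub_poleSum (hrec : CRecursive n C F) {i : Fin n}
    {D : ℕ} {v : ℕ → Fin n → Kf n}
    (hv : ∀ d j, 1 ≤ d → j ≠ i →
      RegEvalAt n (PowerSeries.coeff (D - d) (F j)) ((alpha n j - alpha n i) / (d : Kf n))
        (v d j)) :
    IsLaurentPolyH n (PowerSeries.coeff D (F i) - poleSum C i D v) := by
  obtain ⟨w, hw, hL⟩ := hrec D
    (fun d _ _ i => (CRecursive.isRatH_coeff_and_regAt_coeff hrec (D - d)).1 i)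
    (fun d hd _ i j hij => (CRecursive.isRatH_coeff_and_regAt_coeff hrec d).2 d hd i j hij) i
  have hwv : poleSum C i D w = poleSum C i D v :=
    Finset.sum_congr rfl fun d hd => Finset.sum_congr rfl fun j hj => by
      obtain ⟨hd₁, hdD⟩ := Finset.mem_Icc.1 hd
      have hji := (Finset.mem_erase.1 hj).1
      rw [(hw d j hd₁ hdD hji).unique (hv d j hd₁ hji)]
  rwa [← hwv]

end

theorem statement3_general (n : ℕ)
    (C : ℕ → Fin n → Fin n → Kf n)
    (F : Fin n → PowerSeries (Lf n))
    (hrec : CRecursive n C F) :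
    (∀ (i : Fin n) (d : ℕ), IsRatH n (PowerSeries.coeff d (F i))) ∧
    (∀ d : ℕ, 1 ≤ d → ∀ (d' : ℕ) (i j : Fin n), i ≠ j →
        RegAt n (PowerSeries.coeff d' (F i))
          ((alpha n i - alpha n j) / (d : Kf n))) ∧
    ∃ (N : ℕ → ℕ) (Fc : ℕ → Fin n → ℤ → Kf n) (v : Fin n → ℕ → Fin n → ℕ → Kf n),
      (∀ (i : Fin n) (d : ℕ) (j : Fin n) (d' : ℕ), 1 ≤ d → j ≠ i →
          RegEvalAt n (PowerSeries.coeff d' (F j))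
            ((alpha n j - alpha n i) / (d : Kf n)) (v i d j d')) ∧
      (∀ (i : Fin n) (D : ℕ),
        PowerSeries.coeff D (F i)
          = (∑ r ∈ Finset.Icc (-(N D : ℤ)) ((N D : ℤ)),
              algebraMap (Kf n) (Lf n) (Fc D i r) * hbar n ^ r)
            + ∑ d ∈ Finset.Icc 1 D, ∑ j ∈ Finset.univ.erase i,
                algebraMap (Kf n) (Lf n) (C d i j)
                  * (hbar n
                      - algebraMap (Kf n) (Lf n)
                          ((alpha n j - alpha n i) / (d : Kf n)))⁻¹
                  * algebraMap (Kf n) (Lf n) (v i d j (D - d))) := by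
  have hcoeff := CRecursive.isRatH_coeff_and_regAt_coeff hrec
  have hval (i : Fin n) (d : ℕ) (j : Fin n) (d' : ℕ) : ∃ v, 1 ≤ d → j ≠ i →
      RegEvalAt n (PowerSeries.coeff d' (F j)) ((alpha n j - alpha n i) / (d : Kf n)) v := by
    by_cases h : 1 ≤ d ∧ j ≠ i
    · obtain ⟨v, hv⟩ := (hcoeff d').2 d h.1 j i h.2
      exact ⟨v, fun _ _ => hv⟩
    · exact ⟨0, fun hd hj => absurd ⟨hd, hj⟩ h⟩
  choose v hv using hval
  let R (D : ℕ) (i : Fin n) : Lf n :=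
    PowerSeries.coeff D (F i) - poleSum C i D fun d j => v i d j (D - d)
  choose N hN using fun D => exists_support_subset_Icc fun i =>
    CRecursive.isLaurentPolyH_coeff_sub_poleSum hrec (v := fun d j => v i d j (D - d))
      fun d j hd hj => hv i d j (D - d) hd hj
  refine ⟨fun i D => (hcoeff D).1 i, fun d hd d' i j hij => (hcoeff d').2 d hd i j hij,
    N, fun D i r => (R D i).coeff (-r), v, hv, fun i D => ?_⟩
  rw [← eq_sum_algebraMap_mul_hbar_zpow (hN D i)]
  exact (sub_add_cancel _ _).symm

/-- a `C`-recursive `F` has (a) all `q`-coefficients of each `F(αᵢ,ħ,q)`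
rational in `ħ`; (b) these coefficients regular at every `ħ = (αᵢ−α_j)/d`, `d ≥ 1`, `j ≠ i`;
and (c) `F` satisfies the closed recursion
`F(αᵢ,ħ,q) = ∑_{d,|r|≤N_d} F_i^r(d) ħ^r q^d
  + ∑_{d≥1} ∑_{j≠i} C_i^j(d) q^d/(ħ−(α_j−αᵢ)/d) · F(α_j,(α_j−αᵢ)/d,q)`,
where `v i d j d'` denotes the value at `ħ = (α_j−αᵢ)/d` of the `q^{d'}`-coefficient of
`F(α_j,ħ,q)`. -/
theorem statement3 (n : ℕ) (hn : 1 ≤ n)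
    (C : ℕ → Fin n → Fin n → Kf n)
    (F : Fin n → PowerSeries (Lf n))
    (hrec : CRecursive n C F) :
    (∀ (i : Fin n) (d : ℕ), IsRatH n (PowerSeries.coeff d (F i))) ∧
    (∀ d : ℕ, 1 ≤ d → ∀ (d' : ℕ) (i j : Fin n), i ≠ j →
        RegAt n (PowerSeries.coeff d' (F i))
          ((alpha n i - alpha n j) / (d : Kf n))) ∧
    ∃ (N : ℕ → ℕ) (Fc : ℕ → Fin n → ℤ → Kf n) (v : Fin n → ℕ → Fin n → ℕ → Kf n),
      (∀ (i : Fin n) (d : ℕ) (j : Fin n) (d' : ℕ), 1 ≤ d → j ≠ i →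
          RegEvalAt n (PowerSeries.coeff d' (F j))
            ((alpha n j - alpha n i) / (d : Kf n)) (v i d j d')) ∧
      (∀ (i : Fin n) (D : ℕ),
        PowerSeries.coeff D (F i)
          = (∑ r ∈ Finset.Icc (-(N D : ℤ)) ((N D : ℤ)),
              algebraMap (Kf n) (Lf n) (Fc D i r) * hbar n ^ r)
            + ∑ d ∈ Finset.Icc 1 D, ∑ j ∈ Finset.univ.erase i,
                algebraMap (Kf n) (Lf n) (C d i j)
                  * (hbar n
                      - algebraMap (Kf n) (Lf n)
                          ((alpha n j - alpha n i) / (d : Kf n)))⁻¹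
                  * algebraMap (Kf n) (Lf n) (v i d j (D - d))) :=
  statement3_general n C F hrec

end SQ
end
end

section
/- If s is an integer with 0 ≤ s and s + 1 < |a|, then ∑_{i=1}^{n} L_i(q)^{s+1−|a|} = ∑_{i=1}^{n} α_i^{s+1−|a|} in ℚ_α[[q]] (each L_i is invertible in ℚ_α[[q]] since its constant term α_i is nonzero); equivalently, the formal q-derivative of ∑_{i=1}^{n} L_i(q)^{s+1−|a|} vanishes. -/
/-!
Setting: `Kf n = ℚ_α = ℚ(α₁,…,αₙ)` is the field of rational functions in `n` variables over
`ℚ` (in which the `αᵢ` are pairwise distinct).  For a tuple `a : Fin l → ℤ` of nonzero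
integers with `|a| = ∑|a_k| ≤ n` and `a^a = ∏ a_k^{|a_k|}`, the power series
`L_i ∈ ℚ_α[[q]]` is characterized by having constant term `αᵢ` and satisfying
`∏ₖ(L_i − αₖ) = q·a^a·L_i^{|a|}`.
-/

noncomputable section

namespace SQ

/-- `|a| = ∑ |a_k|`. -/
def absSum (l : ℕ) (a : Fin l → ℤ) : ℕ := ∑ k : Fin l, (a k).natAbs

/-- `a^a = ∏ a_k^{|a_k|}`, as an element of `ℚ_α`. -/
def aPow (n l : ℕ) (a : Fin l → ℤ) : Kf n := ((∏ k : Fin l, a k ^ (a k).natAbs : ℤ) : Kf n)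

/-- The defining property of `L_i ∈ ℚ_α[[q]]`: constant term `αᵢ` and
`∏ₖ(L − αₖ) = q·a^a·L^{|a|}`. -/
def IsLSeries (n l : ℕ) (a : Fin l → ℤ) (i : Fin n) (L : PowerSeries (Kf n)) : Prop :=
  PowerSeries.constantCoeff (R := Kf n) L = alpha n i ∧
    ∏ k : Fin n, (L - PowerSeries.C (R := Kf n) (alpha n k))
      = PowerSeries.X * PowerSeries.C (R := Kf n) (aPow n l a) * L ^ absSum l a

end SQ

/-!
Put `M = L_i⁻¹`. Dividing the defining equation by `L_i^n` gives
`∏ₖ (M − αₖ⁻¹) = d · M^{n−|a|}` with `d` independent of `i`, so the `n` pairwise distinct series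
`L_i⁻¹` are all the roots of the monic degree-`n` polynomial `∏ₖ (X − αₖ⁻¹) − d X^{n−|a|}`. Its
coefficients in degrees `> n − |a|` are those of `∏ₖ (X − αₖ⁻¹)`, so by Vieta the elementary
symmetric functions of the `L_i⁻¹` and of the `αₖ⁻¹` agree in degrees `< |a|`, and by Newton's
identities so do their power sums.
-/

namespace MvPolynomial

variable {σ R : Type*} [Fintype σ] [CommRing R]

theorem aeval_psum_eq_of_aeval_esymm_eq (v w : σ → R) {m : ℕ}
    (h : ∀ j ≤ m, aeval v (esymm σ R j) = aeval w (esymm σ R j)) :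
    aeval v (psum σ R m) = aeval w (psum σ R m) := by
  induction m using Nat.strong_induction_on with
  | _ m ih =>
    rcases Nat.eq_zero_or_pos m with rfl | hm
    · simp [psum_zero]
    rw [psum_eq_mul_esymm_sub_sum σ R m hm]
    simp only [map_sub, map_mul, map_pow, map_neg, map_one, map_natCast, map_sum]
    rw [h m le_rfl]
    congr 1
    refine Finset.sum_congr rfl fun p hp => ?_
    simp only [Finset.mem_filter, Finset.HasAntidiagonal.mem_antidiagonal, Set.mem_Ioo] at hp
    rw [h p.1 (by omega), ih p.2 (by omega) fun j hj => h j (by omega)]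

end MvPolynomial

namespace Polynomial

open Fintype in
theorem coeff_prod_X_sub_C {σ R : Type*} [Fintype σ] [CommRing R] (v : σ → R) {k : ℕ}
    (hk : k ≤ card σ) :
    (∏ i, (X - C (v i))).coeff k
      = (-1) ^ (card σ - k) * MvPolynomial.aeval v (MvPolynomial.esymm σ R (card σ - k)) := by
  rw [MvPolynomial.aeval_esymm_eq_multiset_esymm, Finset.prod, ← (X - C ·).comp_def v,
    ← Multiset.map_map]
  simpa using Multiset.prod_X_sub_C_coeff (Finset.univ.val.map v) (k := k) (by simpa using hk)

theorem prod_X_sub_C_eq_of_isRoot {σ R : Type*} [Fintype σ] [CommRing R] [IsDomain R]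
    {P : R[X]} (hP : P.Monic) (hdeg : P.natDegree ≤ Fintype.card σ) {v : σ → R}
    (hv : Function.Injective v) (hroot : ∀ i, P.IsRoot (v i)) :
    ∏ i, (X - C (v i)) = P := by
  have hle : Finset.univ.val.map v ≤ P.roots :=
    (Multiset.le_iff_subset (Finset.univ.nodup.map hv)).2 fun x hx => by
      obtain ⟨i, -, rfl⟩ := Multiset.mem_map.1 hx
      exact (mem_roots hP.ne_zero).2 (hroot i)
  refine (eq_of_monic_of_dvd_of_natDegree_le (monic_prod_X_sub_C v _) hP ?_
    (by simpa using hdeg)).symm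
  rw [Finset.prod, ← (X - C ·).comp_def v, ← Multiset.map_map]
  exact (Multiset.prod_X_sub_C_dvd_iff_le_roots hP.ne_zero _).2 hle

end Polynomial

section PowerSums

open Polynomial Fintype

variable {σ R : Type*} [Fintype σ] [CommRing R]

theorem prod_sub_eq_mul_pow_of_mul_eq_one {x y e : R} {m : ℕ} (b c : σ → R) (hxy : x * y = 1)
    (hbc : ∀ k, b k * c k = 1) (h : ∏ k, (x - b k) = e * x ^ m) (hm : m ≤ card σ) :
    ∏ k, (y - c k) = (∏ k, -c k) * e * y ^ (card σ - m) := by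
  have hfactor : ∀ k, y - c k = -c k * y * (x - b k) := fun k => by
    linear_combination c k * hxy - y * hbc k
  rw [Finset.prod_congr rfl fun k _ => hfactor k, Finset.prod_mul_distrib,
    Finset.prod_mul_distrib, Finset.prod_const, Finset.card_univ, h]
  have hy : y ^ card σ * x ^ m = y ^ (card σ - m) := by
    rw [← Nat.sub_add_cancel hm, pow_add, Nat.add_sub_cancel, mul_assoc, ← mul_pow, mul_comm y,
      hxy, one_pow, mul_one]
  rw [← hy]
  ring

theorem sum_pow_eq_of_prod_sub_eq_mul_pow [IsDomain R] (β N : σ → R) (d : R) {p r : ℕ}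
    (hN : Function.Injective N) (h : ∀ i, ∏ k, (N i - β k) = d * N i ^ p)
    (hr : r + p < card σ) :
    ∑ i, N i ^ r = ∑ i, β i ^ r := by
  set P : R[X] := ∏ k, (X - C (β k)) - C d * X ^ p
  have hp : p < card σ := by omega
  have hlt : (C d * X ^ p).degree < (∏ k, (X - C (β k))).degree := by
    rw [degree_eq_natDegree (monic_prod_X_sub_C β _).ne_zero, natDegree_finsetProd_X_sub_C_eq_card]
    exact (degree_C_mul_X_pow_le p d).trans_lt (by exact_mod_cast hp)
  have hP : P.Monic := (monic_prod_X_sub_C β _).sub_of_left hlt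
  have hdeg : P.natDegree ≤ card σ :=
    (natDegree_sub_le _ _).trans (max_le (by simp) ((natDegree_C_mul_X_pow_le d p).trans hp.le))
  have hroots : ∏ i, (X - C (N i)) = P :=
    prod_X_sub_C_eq_of_isRoot hP hdeg hN fun i => by simp [P, eval_prod, h]
  have hesymm : ∀ j ≤ r, MvPolynomial.aeval N (MvPolynomial.esymm σ R j)
      = MvPolynomial.aeval β (MvPolynomial.esymm σ R j) := fun j hj => by
    have hcoeff := congrArg (coeff · (card σ - j)) hroots
    simp only [P, coeff_sub, coeff_C_mul_X_pow, if_neg (by omega : card σ - j ≠ p), sub_zero,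
      coeff_prod_X_sub_C _ (Nat.sub_le _ _), Nat.sub_sub_self (by omega : j ≤ card σ)] at hcoeff
    exact mul_left_cancel₀ (pow_ne_zero _ (neg_ne_zero.2 one_ne_zero)) hcoeff
  simpa [MvPolynomial.psum] using MvPolynomial.aeval_psum_eq_of_aeval_esymm_eq N β hesymm

end PowerSums

namespace SQ

theorem alpha_injective (n : ℕ) : Function.Injective (alpha n) :=
  fun _ _ h => MvPolynomial.X_injective (IsFractionRing.injective _ (Kf n) h)

theorem alpha_ne_zero {n : ℕ} (i : Fin n) : alpha n i ≠ 0 := by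
  rw [alpha, map_ne_zero_iff _ (IsFractionRing.injective _ (Kf n))]
  exact MvPolynomial.X_ne_zero i

namespace IsLSeries

open PowerSeries

variable {n l : ℕ} {a : Fin l → ℤ}

theorem mul_inv_eq_one {i : Fin n} {L : PowerSeries (Kf n)} (hL : IsLSeries n l a i L) :
    L * L⁻¹ = 1 :=
  PowerSeries.mul_inv_cancel _ (by rw [hL.1]; exact alpha_ne_zero i)

theorem prod_inv_sub_eq {i : Fin n} {L : PowerSeries (Kf n)} (hL : IsLSeries n l a i L)
    (hm : absSum l a ≤ n) :
    ∏ k, (L⁻¹ - C (alpha n k)⁻¹)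
      = (∏ k, -C (alpha n k)⁻¹) * (X * C (aPow n l a))
          * L⁻¹ ^ (Fintype.card (Fin n) - absSum l a) :=
  prod_sub_eq_mul_pow_of_mul_eq_one _ _ hL.mul_inv_eq_one
    (fun k => by rw [← map_mul, mul_inv_cancel₀ (alpha_ne_zero k), map_one]) hL.2
    (by simpa using hm)

theorem injective_inv {L : Fin n → PowerSeries (Kf n)} (hL : ∀ i, IsLSeries n l a i (L i)) :
    Function.Injective fun i => (L i)⁻¹ := fun i j h =>
  alpha_injective n <| inv_injective <| by
    simpa [constantCoeff_inv, (hL i).1, (hL j).1] using congrArg constantCoeff h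

end IsLSeries

theorem statement15_general (n l : ℕ) (a : Fin l → ℤ)
    (hm : absSum l a ≤ n)
    (L : Fin n → PowerSeries (Kf n)) (hL : ∀ i : Fin n, IsLSeries n l a i (L i))
    (s : ℕ) (hs : s + 1 < absSum l a) :
    ∑ i : Fin n, ((L i)⁻¹) ^ (absSum l a - (s + 1))
      = PowerSeries.C (R := Kf n) (∑ i : Fin n, ((alpha n i)⁻¹) ^ (absSum l a - (s + 1))) := by
  rw [map_sum]
  simp_rw [map_pow]
  exact sum_pow_eq_of_prod_sub_eq_mul_pow _ _ _ (IsLSeries.injective_inv hL)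
    (fun i => (hL i).prod_inv_sub_eq hm) (by simp only [Fintype.card_fin]; omega)

/-- if `0 ≤ s` and `s + 1 < |a|`, then
`∑ᵢ L_i(q)^{s+1−|a|} = ∑ᵢ αᵢ^{s+1−|a|}` in `ℚ_α[[q]]` (the negative powers being
`L_i^{s+1−|a|} = (L_i⁻¹)^{|a|−s−1}`, each `L_i` being invertible since its constant term is
`αᵢ ≠ 0`). -/
theorem statement15 (n l : ℕ) (hn : 1 ≤ n) (a : Fin l → ℤ) (ha : ∀ k, a k ≠ 0)
    (hm : absSum l a ≤ n)
    (L : Fin n → PowerSeries (Kf n)) (hL : ∀ i : Fin n, IsLSeries n l a i (L i))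
    (s : ℕ) (hs : s + 1 < absSum l a) :
    ∑ i : Fin n, ((L i)⁻¹) ^ (absSum l a - (s + 1))
      = PowerSeries.C (R := Kf n) (∑ i : Fin n, ((alpha n i)⁻¹) ^ (absSum l a - (s + 1))) :=
  statement15_general n l a hm L hL s hs

end SQ
end
end
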